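/- (Decomposition of the inconsistency probability over conflict-independent parts.) Let D₁ and D₂ be disjoint finite sets with no conflicts across them (¬C(a,b) for all a ∈ D₁, b ∈ D₂), and set n₁ = |D₁|, n₂ = |D₂|, n = n₁ + n₂. For 0 ≤ m ≤ n, let P^m be the probability that a uniformly random m-element subset of D₁ ∪ D₂ is inconsistent, and for i ∈ {1,2} and 0 ≤ mᵢ ≤ nᵢ let Tᵢ^{mᵢ} be the probability that a uniformly random mᵢ-element subset of Dᵢ is inconsistent. Then P^m = (1/C(n,m)) · Σ_{m₁+m₂=m, 0≤m₁≤n₁, 0≤m₂≤n₂} C(n₁,m₁) · C(n₂,m₂) · (1 − (1 − T₁^{m₁}) · (1 − T₂^{m₂})). -/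

import Mathlib

/-! Split an `m`-subset `S` of `D₁ ∪ D₂` into `S ∩ D₁` and `S ∩ D₂`. As no conflict crosses the
two parts, `S` is consistent iff both pieces are, so the consistent `m`-subsets of `D₁ ∪ D₂` number
`∑_{m₁ + m₂ = m} c₁(m₁) c₂(m₂)`, where `cᵢ(k)` counts the consistent `k`-subsets of `Dᵢ`. Since
`C(nᵢ, k) (1 - Tᵢ^k) = cᵢ(k)`, the summand is `C(n₁, m₁) C(n₂, m₂) - c₁(m₁) c₂(m₂)`, and
Vandermonde's identity turns the sum into the number of inconsistent `m`-subsets of `D₁ ∪ D₂`. -/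
open scoped BigOperators Classical

variable {α : Type*} [DecidableEq α]

/-- A finite set `E` is consistent if it contains no two distinct conflicting elements. -/
def Consistent (C : α → α → Prop) (E : Finset α) : Prop :=
  ∀ g ∈ E, ∀ h ∈ E, g ≠ h → ¬ C g h

/-- The probability that a uniformly random `m`-element subset of `T` is inconsistent. -/
noncomputable def inconsProb (C : α → α → Prop) (T : Finset α) (m : ℕ) : ℝ :=
  (((T.powersetCard m).filter fun S => ¬ Consistent C S).card : ℝ) / (T.card.choose m : ℝ)

open Finset

omit [DecidableEq α] in
lemma Consistent.mono {C : α → α → Prop} {S T : Finset α} (hST : S ⊆ T) (hT : Consistent C T) :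
    Consistent C S :=
  fun g hg h hh => hT g (hST hg) h (hST hh)

lemma Consistent.union {C : α → α → Prop} (hsymm : Symmetric C) {S₁ S₂ : Finset α}
    (h₁ : Consistent C S₁) (h₂ : Consistent C S₂) (hcross : ∀ a ∈ S₁, ∀ b ∈ S₂, ¬ C a b) :
    Consistent C (S₁ ∪ S₂) := by
  intro g hg h hh hne
  rcases mem_union.1 hg with hg | hg <;> rcases mem_union.1 hh with hh | hh
  · exact h₁ g hg h hh hne
  · exact hcross g hg h hh
  · exact fun hC => hcross h hh g hg (hsymm hC)
  · exact h₂ g hg h hh hne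

lemma Finset.inter_union_inter_eq_self_of_subset_union {S D₁ D₂ : Finset α} (h : S ⊆ D₁ ∪ D₂) :
    S ∩ D₁ ∪ S ∩ D₂ = S := by
  rw [← inter_union_distrib_left, inter_eq_left.2 h]

lemma Finset.union_inter_eq_of_subset_of_disjoint {A B D₁ D₂ : Finset α} (hdisj : Disjoint D₁ D₂)
    (hA : A ⊆ D₁) (hB : B ⊆ D₂) : (A ∪ B) ∩ D₁ = A ∧ (A ∪ B) ∩ D₂ = B := by
  rw [union_inter_distrib_right, union_inter_distrib_right, inter_eq_left.2 hA, inter_eq_left.2 hB,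
    disjoint_iff_inter_eq_empty.1 (hdisj.symm.mono_left hB),
    disjoint_iff_inter_eq_empty.1 (hdisj.mono_left hA), union_empty, empty_union]
  exact ⟨rfl, rfl⟩

noncomputable def consistentSubsets (C : α → α → Prop) (T : Finset α) (k : ℕ) :
    Finset (Finset α) :=
  (T.powersetCard k).filter (Consistent C)

omit [DecidableEq α] in
lemma mem_consistentSubsets {C : α → α → Prop} {T S : Finset α} {k : ℕ} :
    S ∈ consistentSubsets C T k ↔ S ⊆ T ∧ #S = k ∧ Consistent C S := by
  rw [consistentSubsets, mem_filter, mem_powersetCard, and_assoc]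

omit [DecidableEq α] in
lemma card_consistentSubsets_add_card_inconsistent (C : α → α → Prop) (T : Finset α) (k : ℕ) :
    #(consistentSubsets C T k) + #((T.powersetCard k).filter fun S => ¬ Consistent C S)
      = T.card.choose k := by
  rw [consistentSubsets, card_filter_add_card_filter_not, card_powersetCard]

section Split

variable {C : α → α → Prop} {D₁ D₂ : Finset α}

lemma card_consistentSubsets_union_fiber (hsymm : Symmetric C) (hdisj : Disjoint D₁ D₂)
    (hcross : ∀ a ∈ D₁, ∀ b ∈ D₂, ¬ C a b) {m : ℕ} {p : ℕ × ℕ} (hp : p.1 + p.2 = m) :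
    #{S ∈ consistentSubsets C (D₁ ∪ D₂) m | (#(S ∩ D₁), #(S ∩ D₂)) = p}
      = #(consistentSubsets C D₁ p.1) * #(consistentSubsets C D₂ p.2) := by
  rw [← card_product]
  refine card_nbij' (fun S => (S ∩ D₁, S ∩ D₂)) (fun x => x.1 ∪ x.2) ?_ ?_ ?_ ?_
  · rintro S hS
    simp only [mem_coe, mem_filter, mem_consistentSubsets, Prod.ext_iff] at hS
    obtain ⟨⟨-, -, hcons⟩, hc₁, hc₂⟩ := hS
    simp only [coe_product, Set.mem_prod, mem_coe, mem_consistentSubsets]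
    exact ⟨⟨inter_subset_right, hc₁, hcons.mono inter_subset_left⟩,
      ⟨inter_subset_right, hc₂, hcons.mono inter_subset_left⟩⟩
  · rintro ⟨A, B⟩ hAB
    simp only [coe_product, Set.mem_prod, mem_coe, mem_consistentSubsets] at hAB
    obtain ⟨⟨hA, hcA, hconsA⟩, hB, hcB, hconsB⟩ := hAB
    obtain ⟨hA₁, hB₂⟩ := union_inter_eq_of_subset_of_disjoint hdisj hA hB
    simp only [mem_coe, mem_filter, mem_consistentSubsets, hA₁, hB₂, hcA, hcB, and_true]
    refine ⟨union_subset_union hA hB, ?_, ?_⟩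
    · rw [card_union_of_disjoint (hdisj.mono hA hB), hcA, hcB, hp]
    · exact hconsA.union hsymm hconsB fun a ha b hb => hcross a (hA ha) b (hB hb)
  · rintro S hS
    simp only [mem_coe, mem_filter, mem_consistentSubsets] at hS
    exact inter_union_inter_eq_self_of_subset_union hS.1.1
  · rintro ⟨A, B⟩ hAB
    simp only [coe_product, Set.mem_prod, mem_coe, mem_consistentSubsets] at hAB
    simpa only [Prod.mk.injEq] using union_inter_eq_of_subset_of_disjoint hdisj hAB.1.1 hAB.2.1

theorem card_consistentSubsets_union (hsymm : Symmetric C) (hdisj : Disjoint D₁ D₂)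
    (hcross : ∀ a ∈ D₁, ∀ b ∈ D₂, ¬ C a b) (m : ℕ) :
    #(consistentSubsets C (D₁ ∪ D₂) m)
      = ∑ p ∈ antidiagonal m, #(consistentSubsets C D₁ p.1) * #(consistentSubsets C D₂ p.2) := by
  have hsplit :
      ∀ S ∈ consistentSubsets C (D₁ ∪ D₂) m, (#(S ∩ D₁), #(S ∩ D₂)) ∈ antidiagonal m := by
    intro S hS
    obtain ⟨hsub, hcard, -⟩ := mem_consistentSubsets.1 hS
    rw [HasAntidiagonal.mem_antidiagonal,
      ← card_union_of_disjoint (hdisj.mono inter_subset_right inter_subset_right),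
      inter_union_inter_eq_self_of_subset_union hsub, hcard]
  rw [card_eq_sum_card_fiberwise hsplit]
  exact sum_congr rfl fun p hp =>
    card_consistentSubsets_union_fiber hsymm hdisj hcross (HasAntidiagonal.mem_antidiagonal.1 hp)

end Split

omit [DecidableEq α] in
/-- Also for `k > #T`, where both sides vanish although `inconsProb C T k = 0 / 0 = 0`. -/
lemma choose_mul_one_sub_inconsProb (C : α → α → Prop) (T : Finset α) (k : ℕ) :
    (T.card.choose k : ℝ) * (1 - inconsProb C T k) = #(consistentSubsets C T k) := by
  have hsplit := card_consistentSubsets_add_card_inconsistent C T k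
  rcases eq_or_ne (T.card.choose k) 0 with h | h
  · rw [h, Nat.cast_zero, zero_mul]
    exact_mod_cast (Nat.eq_zero_of_add_eq_zero (hsplit.trans h)).1.symm
  · rw [inconsProb, mul_one_sub, mul_div_cancel₀ _ (Nat.cast_ne_zero.2 h), ← hsplit]
    push_cast
    ring

theorem inconsProb_union_decomposition_general (C : α → α → Prop) (hsymm : Symmetric C)
    (D₁ D₂ : Finset α) (hdisj : Disjoint D₁ D₂)
    (hcross : ∀ a ∈ D₁, ∀ b ∈ D₂, ¬ C a b)
    (m : ℕ) :
    inconsProb C (D₁ ∪ D₂) m =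
      (1 / (((D₁.card + D₂.card).choose m : ℕ) : ℝ)) *
        ∑ p ∈ (Finset.HasAntidiagonal.antidiagonal m).filter
            (fun p => p.1 ≤ D₁.card ∧ p.2 ≤ D₂.card),
          (D₁.card.choose p.1 : ℝ) * (D₂.card.choose p.2 : ℝ) *
            (1 - (1 - inconsProb C D₁ p.1) * (1 - inconsProb C D₂ p.2)) := by
  have hsummand (p : ℕ × ℕ) :
      (D₁.card.choose p.1 : ℝ) * (D₂.card.choose p.2 : ℝ) *
          (1 - (1 - inconsProb C D₁ p.1) * (1 - inconsProb C D₂ p.2))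
        = (D₁.card.choose p.1 * D₂.card.choose p.2 : ℕ)
          - (#(consistentSubsets C D₁ p.1) * #(consistentSubsets C D₂ p.2) : ℕ) := by
    push_cast
    rw [← choose_mul_one_sub_inconsProb, ← choose_mul_one_sub_inconsProb]
    ring
  have hsupport : ∀ p ∈ antidiagonal m,
      (D₁.card.choose p.1 : ℝ) * (D₂.card.choose p.2 : ℝ) *
          (1 - (1 - inconsProb C D₁ p.1) * (1 - inconsProb C D₂ p.2)) ≠ 0 →
        p.1 ≤ D₁.card ∧ p.2 ≤ D₂.card := by
    intro p _ hp
    simpa [Nat.choose_eq_zero_iff] using left_ne_zero_of_mul hp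
  have hinconsistent := card_consistentSubsets_add_card_inconsistent C (D₁ ∪ D₂) m
  rw [sum_filter_of_ne hsupport, sum_congr rfl fun p _ => hsummand p, sum_sub_distrib,
    ← Nat.cast_sum, ← Nat.cast_sum, ← Nat.add_choose_eq,
    ← card_consistentSubsets_union hsymm hdisj hcross, ← card_union_of_disjoint hdisj,
    inconsProb, ← hinconsistent, one_div_mul_eq_div]
  push_cast
  ring

/-- Decomposition of the inconsistency probability over conflict-independent parts:
if `D₁`, `D₂` are disjoint and conflict-free across each other, then
`P^m = (1/C(n,m)) · Σ_{m₁+m₂=m, m₁≤n₁, m₂≤n₂} C(n₁,m₁)·C(n₂,m₂)·(1−(1−T₁^{m₁})(1−T₂^{m₂}))`. -/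
theorem inconsProb_union_decomposition (C : α → α → Prop) (hsymm : Symmetric C)
    (D₁ D₂ : Finset α) (hdisj : Disjoint D₁ D₂)
    (hcross : ∀ a ∈ D₁, ∀ b ∈ D₂, ¬ C a b)
    (m : ℕ) (hm : m ≤ D₁.card + D₂.card) :
    inconsProb C (D₁ ∪ D₂) m =
      (1 / (((D₁.card + D₂.card).choose m : ℕ) : ℝ)) *
        ∑ p ∈ (Finset.HasAntidiagonal.antidiagonal m).filter
            (fun p => p.1 ≤ D₁.card ∧ p.2 ≤ D₂.card),
          (D₁.card.choose p.1 : ℝ) * (D₂.card.choose p.2 : ℝ) *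
            (1 - (1 - inconsProb C D₁ p.1) * (1 - inconsProb C D₂ p.2)) :=
  inconsProb_union_decomposition_general C hsymm D₁ D₂ hdisj hcross m
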